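/- arXiv:1305.3629 — 2 statements merged into one kernel-verified Lean document; each statement's English description precedes it below -/
import Mathlib

section
/- If 𝒟 is a normal κ-covering matrix for κ⁺ (κ an uncountable regular cardinal), then CP(𝒟) fails: for every unbounded T ⊆ κ⁺ there is a subset X ⊆ T of size κ such that X is not contained in any D(i,β). -/
/-- The order type of a set of ordinals. -/
noncomputable def otp (X : Set Ordinal) : Ordinal.{1} :=
  Ordinal.type ((· < ·) : X → X → Prop)

/-- A `θ`-covering matrix for `lam` (both viewed as ordinals). -/
structure CovMatrix (θ lam : Ordinal) where
  D : Ordinal → Ordinal → Set Ordinal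
  union_eq : ∀ β < lam, (⋃ i ∈ Set.Iio θ, D i β) = Set.Iio β
  mono : ∀ β < lam, ∀ i j, i < j → j < θ → D i β ⊆ D j β
  cover : ∀ β γ, β < γ → γ < lam → ∀ i < θ, ∃ j < θ, D i β ⊆ D j γ

/-- The covering matrix is normal. -/
def CovMatrix.Normal {θ lam : Ordinal} (M : CovMatrix θ lam) : Prop :=
  ∃ b < lam, ∀ i < θ, ∀ γ < lam, otp (M.D i γ) < Ordinal.lift.{1,0} b

theorem otp_mono {X Y : Set Ordinal} (h : X ⊆ Y) : otp X ≤ otp Y :=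
  (RelEmbedding.ofMonotone (r := ((· < ·) : X → X → Prop))
    (s := ((· < ·) : Y → Y → Prop)) (fun x => ⟨x.1, h x.2⟩)
    (fun _ _ hab => hab)).ordinal_type_le

theorem otp_Iio (o : Ordinal) : otp (Set.Iio o) = Ordinal.lift.{1,0} o := by
  rw [← Ordinal.typein_ordinal o]
  rfl

/-- If `𝒟` is a normal `κ`-covering matrix for `κ⁺`, then `CP(𝒟)` fails: every
unbounded `T ⊆ κ⁺` has a subset of size `κ` contained in no `D(i,β)`. -/
theorem stmt_3 (κ : Cardinal) (hreg : κ.IsRegular) (huc : Cardinal.aleph0 < κ)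
    (M : CovMatrix κ.ord (Order.succ κ).ord) (hM : M.Normal)
    (T : Set Ordinal) (hTsub : T ⊆ Set.Iio (Order.succ κ).ord)
    (hTunb : ∀ γ < (Order.succ κ).ord, ∃ x ∈ T, γ ≤ x) :
    ∃ X ⊆ T, Cardinal.mk X = Cardinal.lift.{1,0} κ ∧
      ∀ i < κ.ord, ∀ β < (Order.succ κ).ord, ¬ X ⊆ M.D i β := by
  set Λ := (Order.succ κ).ord with hΛ
  obtain ⟨b, hb, hbD⟩ := hM
  have hκℵ : Cardinal.aleph0 ≤ κ := huc.le
  have hregΛ : (Order.succ κ).IsRegular := Cardinal.isRegular_succ hκℵ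
  have hcof : Λ.cof = Order.succ κ := hregΛ.cof_eq
  have hΛlim : Order.IsSuccLimit Λ := Cardinal.isSuccLimit_ord (hκℵ.trans (Order.lt_succ κ).le)
  set b' := max b κ.ord with hb'def
  have hb' : b' < Λ := max_lt hb (Cardinal.ord_lt_ord.2 (Order.lt_succ κ))
  have hb'card : b'.card = κ := by
    refine le_antisymm (Order.lt_succ_iff.1 (Cardinal.lt_ord.1 hb')) ?_
    have := Ordinal.card_le_card (le_max_right b κ.ord)
    rwa [Cardinal.card_ord] at this
  set T'' := T ∪ Set.Ici Λ with hT''def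
  have hT'' : ¬ BddAbove T'' := by
    rintro ⟨u, hu⟩
    have h1 : max Λ (u + 1) ∈ T'' := Or.inr (Set.mem_Ici.2 (le_max_left _ _))
    have h2 := hu h1
    have : u + 1 ≤ u := le_trans (le_max_right _ _) h2
    exact absurd this (by simp [Order.succ_le_iff])
  set f := Ordinal.enumOrd T'' with hfdef
  have hmono : StrictMono f := Ordinal.enumOrd_strictMono hT''
  have key : ∀ α, α < Λ → f α ∈ T ∧ f α < Λ := by
    intro α
    induction α using Ordinal.induction with
    | _ α IH =>
      intro hα
      set s := Ordinal.bsup.{0,0} α (fun β _ => f β + 1) with hsdef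
      have hs : s < Λ := by
        refine Ordinal.bsup_lt_ord ?_ ?_
        · rw [hcof]; exact Cardinal.lt_ord.1 hα
        · exact fun i hi => hΛlim.succ_lt ((IH i hi (hi.trans hα)).2)
      obtain ⟨x, hxT, hsx⟩ := hTunb s hs
      have hfx : f α ≤ x := by
        refine Ordinal.enumOrd_le_of_forall_lt (Or.inl hxT) ?_
        intro β hβ
        have h1 : f β + 1 ≤ s := Ordinal.le_bsup (fun β _ => f β + 1) β hβ
        exact lt_of_lt_of_le (lt_of_lt_of_le (Order.lt_succ _) h1) hsx
      have hfΛ : f α < Λ := lt_of_le_of_lt hfx (hTsub hxT)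
      rcases Ordinal.enumOrd_mem hT'' α with h | h
      · exact ⟨h, hfΛ⟩
      · exact absurd h (not_le.2 hfΛ)
  refine ⟨f '' Set.Iio b', ?_, ?_, ?_⟩
  · rintro _ ⟨α, hα, rfl⟩
    exact (key α (hα.trans hb')).1
  · rw [Cardinal.mk_image_eq_of_injOn _ _ (hmono.injective.injOn),
      Ordinal.mk_Iio_ordinal, hb'card]
  · intro i hi β hβ hsub
    have h1 := otp_mono hsub
    have h2 := hbD i hi β hβ
    have h3 : Ordinal.lift.{1,0} b' ≤ otp (f '' Set.Iio b') := by
      rw [← otp_Iio]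
      exact (RelEmbedding.ofMonotone
        (r := ((· < ·) : Set.Iio b' → Set.Iio b' → Prop))
        (s := ((· < ·) : (f '' Set.Iio b') → (f '' Set.Iio b') → Prop))
        (fun x => ⟨f x.1, ⟨x.1, x.2, rfl⟩⟩)
        (fun _ _ hab => hmono hab)).ordinal_type_le
    have h4 : Ordinal.lift.{1,0} b ≤ Ordinal.lift.{1,0} b' :=
      Ordinal.lift_le.2 (le_max_left _ _)
    exact absurd ((h3.trans h1).trans_lt h2) (not_lt.2 h4)
end

section
/- Let 𝒟 be the covering matrix defined from ρ_θ by D(i,β) = {α < β | ρ_θ(α,β) ≤ i}. If β < λ has cf(β) = θ and C_β^{[θ]} = {α ∈ C_β | θ divides otp(C_β ∩ α)} is bounded below β, then for every i < θ, D(i,β) is bounded below β. Indeed, if ξ = max(C_β^{[θ]}) and ⟨β_i | i<θ⟩ enumerates C_β \ (ξ+1) in increasing order, then D(i,β) ⊆ β_i + 1. -/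
/-- `δ` is an accumulation (limit) point of the set `C` of ordinals. -/
def IsAcc (C : Set Ordinal) (δ : Ordinal) : Prop :=
  0 < δ ∧ ∀ γ < δ, ∃ x ∈ C, γ < x ∧ x < δ

/-- `C` is club in `α`. -/
def IsClubIn (C : Set Ordinal) (α : Ordinal) : Prop :=
  (∀ x ∈ C, x < α) ∧ (∀ γ < α, ∃ x ∈ C, γ ≤ x) ∧ (∀ δ < α, IsAcc C δ → δ ∈ C)

/-- `S` is stationary in `α`. -/
def IsStationaryIn (S : Set Ordinal) (α : Ordinal) : Prop :=
  ∀ C, IsClubIn C α → (S ∩ C).Nonempty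

/-- `C` is a coherent sequence on `lam`: each `C α` is club in `α` for limit
`α < lam`, and if `α` is a limit point of `C β` then `C α = C β ∩ α`. -/
def Coherent (lam : Ordinal) (C : Ordinal → Set Ordinal) : Prop :=
  (∀ α, α < lam → Order.IsSuccLimit α → IsClubIn (C α) α) ∧
  (∀ α β, β < lam → α < β → IsAcc (C β) α → C α = C β ∩ Set.Iio α)

/-- `T` threads the coherent sequence `C`: `T` is club in `lam` and agrees with
`C` at all of its limit points. -/
def IsThread (lam : Ordinal) (C : Ordinal → Set Ordinal) (T : Set Ordinal) : Prop :=
  IsClubIn T lam ∧ ∀ α, IsAcc T α → T ∩ Set.Iio α = C α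

/-- A `□(lam)`-sequence: a coherent sequence with no thread. -/
def SqSeq (lam : Ordinal) (C : Ordinal → Set Ordinal) : Prop :=
  Coherent lam C ∧ ¬ ∃ T, IsThread lam C T

/-- `L` is Todorcevic's function `Λ_θ` computed from the sequence `C`:
`Λ_θ(α,β)` is the largest `ξ ∈ C β ∩ (α+1)` with `θ ∣ otp (C β ∩ ξ)`. -/
def IsLambda (θ lam : Ordinal) (C : Ordinal → Set Ordinal)
    (L : Ordinal → Ordinal → Ordinal) : Prop :=
  ∀ α β, α < β → β < lam →
    L α β ∈ C β ∧ L α β ≤ α ∧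
    Ordinal.lift.{1,0} θ ∣ otp (C β ∩ Set.Iio (L α β)) ∧
    ∀ ξ ∈ C β, ξ ≤ α → Ordinal.lift.{1,0} θ ∣ otp (C β ∩ Set.Iio ξ) → ξ ≤ L α β

/-- `rho` is Todorcevic's function `ρ_θ`, characterized by its recursive equation
`ρ_θ(α,β) = sup {otp (C β ∩ [Λ_θ(α,β), α)), ρ_θ(α, min (C β \ α)),
ρ_θ(ξ, α) : ξ ∈ C β ∩ [Λ_θ(α,β), α)}` together with `ρ_θ(α,α) = 0`. -/
def IsRho (θ lam : Ordinal) (C : Ordinal → Set Ordinal)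
    (L rho : Ordinal → Ordinal → Ordinal) : Prop :=
  (∀ α, rho α α = 0) ∧
  ∀ α β, α < β → β < lam →
    Ordinal.lift.{1,0} (rho α β) =
      max (otp (C β ∩ Set.Ico (L α β) α))
        (max (Ordinal.lift.{1,0} (rho α (sInf (C β ∩ Set.Ici α))))
          (sSup {x : Ordinal.{1} |
            ∃ ξ ∈ C β ∩ Set.Ico (L α β) α, x = Ordinal.lift.{1,0} (rho ξ α)}))


lemma lift_le_otp {X : Set Ordinal} {o : Ordinal} (f : Ordinal → Ordinal)
    (hmem : ∀ j < o, f j ∈ X) (hmono : ∀ j k, j < k → k < o → f j < f k) :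
    Ordinal.lift.{1,0} o ≤ otp X := by
  have h1 : otp (Set.Iio o) = Ordinal.lift.{1,0} o := by
    rw [otp, ← Ordinal.typein_ordinal o]; rfl
  rw [← h1, otp, otp]
  refine RelEmbedding.ordinal_type_le ?_
  refine RelEmbedding.ofMonotone (fun x : Set.Iio o => (⟨f x, hmem x x.2⟩ : X)) ?_
  intro a b h
  exact hmono a b h b.2

/-- If `cf β = θ` and `C_β^{[θ]} = {γ ∈ C β | θ ∣ otp (C β ∩ γ)}` is bounded below `β`
with maximum `ξ`, and `e` enumerates `C β \ (ξ+1)` in increasing order, then for every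
`i < θ` the set `D(i,β) = {α < β | ρ_θ(α,β) ≤ i}` satisfies `D(i,β) ⊆ e i + 1`; in
particular it is bounded below `β`. -/
theorem stmt_8 (θ lam : Cardinal) (hθ : θ.IsRegular) (hlam : lam.IsRegular)
    (hlt : θ < lam) (C : Ordinal → Set Ordinal) (hsq : SqSeq lam.ord C)
    (hsucc : ∀ α, α + 1 < lam.ord → C (α + 1) = {α})
    (L rho : Ordinal → Ordinal → Ordinal)
    (hL : IsLambda θ.ord lam.ord C L) (hrho : IsRho θ.ord lam.ord C L rho)
    (β : Ordinal) (hβ : β < lam.ord) (hcf : β.cof = θ)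
    (ξ : Ordinal)
    (hξmem : ξ ∈ {γ ∈ C β | Ordinal.lift.{1,0} θ.ord ∣ otp (C β ∩ Set.Iio γ)})
    (hξmax : ∀ γ ∈ {γ ∈ C β | Ordinal.lift.{1,0} θ.ord ∣ otp (C β ∩ Set.Iio γ)}, γ ≤ ξ)
    (e : Ordinal → Ordinal)
    (he_mem : ∀ i < θ.ord, e i ∈ C β ∧ ξ < e i)
    (he_mono : ∀ i j, i < j → j < θ.ord → e i < e j)
    (he_surj : ∀ γ ∈ C β, ξ < γ → ∃ i < θ.ord, e i = γ) :
    ∀ i < θ.ord,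
      {α | α < β ∧ rho α β ≤ i} ⊆ Set.Iic (e i) ∧
      ∃ η < β, ∀ α ∈ {α | α < β ∧ rho α β ≤ i}, α ≤ η := by
  intro i hi
  have hβlim : Order.IsSuccLimit β := Ordinal.aleph0_le_cof.mp (by rw [hcf]; exact hθ.aleph0_le)
  have hclub := hsq.1.1 β hβ hβlim
  have heiβ : e i < β := hclub.1 _ (he_mem i hi).1
  have hsub : {α | α < β ∧ rho α β ≤ i} ⊆ Set.Iic (e i) := by
    intro α hα
    by_contra hgt
    rw [Set.mem_Iic, not_le] at hgt
    obtain ⟨hαβ, hρ⟩ := hα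
    obtain ⟨hL1, hL2, hL3, hL4⟩ := hL α β hαβ hβ
    have hLξ : L α β ≤ ξ := hξmax _ ⟨hL1, hL3⟩
    have key : Ordinal.lift.{1,0} (i + 1) ≤ otp (C β ∩ Set.Ico (L α β) α) := by
      refine lift_le_otp e ?_ ?_
      · intro j hj
        rw [Ordinal.add_one_eq_succ, Order.lt_succ_iff] at hj
        have hjθ : j < θ.ord := lt_of_le_of_lt hj hi
        have hej := he_mem j hjθ
        refine ⟨hej.1, le_trans hLξ (le_of_lt hej.2), ?_⟩
        rcases lt_or_eq_of_le hj with hlt | heq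
        · exact lt_trans (he_mono j i hlt hi) hgt
        · rw [heq]; exact hgt
      · intro j k hjk hk
        rw [Ordinal.add_one_eq_succ, Order.lt_succ_iff] at hk
        exact he_mono j k hjk (lt_of_le_of_lt hk hi)
    have heq := (hrho.2 α β hαβ hβ)
    have hle : Ordinal.lift.{1,0} (rho α β) ≤ Ordinal.lift.{1,0} i := Ordinal.lift_le.mpr hρ
    have hge : Ordinal.lift.{1,0} (i + 1) ≤ Ordinal.lift.{1,0} (rho α β) := by
      rw [heq]
      exact le_trans key (le_max_left _ _)
    have : Ordinal.lift.{1,0} (i + 1) ≤ Ordinal.lift.{1,0} i := le_trans hge hle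
    rw [Ordinal.lift_le] at this
    rw [Ordinal.add_one_eq_succ] at this
    exact (Order.lt_succ i).not_ge this
  exact ⟨hsub, e i, heiβ, fun α hα => hsub hα⟩
end
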